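/- (Quantum Fisher information equals the survival activity.) Define H_1 = ¼[(V_0† − V_0^{−1})(V_0 − (V_0†)^{−1}) + ∑_{m=1}^{M−1} V_m† V_m] and H_2 = (i/2)[(V_0† − V_0^{−1}) V_0 + ∑_{m=1}^{M−1} V_m† V_m]. Then H_2 = 0 and, for every density matrix ρ ∈ M_n(ℂ), the quantum Fisher information J = 4(Tr[ρ H_1] − (Tr[ρ H_2])²) of the virtually perturbed Kraus family at θ = 0 satisfies J = Tr[ρ (V_0† V_0)^{−1}] − 1, i.e. J equals the survival activity Ξ. -/
import Mathlib


open Matrix Finset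
open scoped ComplexOrder

noncomputable section

variable {n M : ℕ}

/-- `H_1 = ¼[(V_0† − V_0⁻¹)(V_0 − (V_0†)⁻¹) + ∑_{m≥1} V_m† V_m]`, the `θ = 0` value of
`H_1(θ) = ∑_m (dV_m/dθ)† (dV_m/dθ)` for the virtually perturbed Kraus family. -/
def H1 (V : Fin (M + 1) → Matrix (Fin n) (Fin n) ℂ) : Matrix (Fin n) (Fin n) ℂ :=
  (1 / 4 : ℂ) •
    (((V 0)ᴴ - (V 0)⁻¹) * (V 0 - ((V 0)ᴴ)⁻¹) +
      ∑ m ∈ Finset.univ.erase (0 : Fin (M + 1)), (V m)ᴴ * V m)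

/-- `H_2 = (i/2)[(V_0† − V_0⁻¹) V_0 + ∑_{m≥1} V_m† V_m]`, the `θ = 0` value of
`H_2(θ) = i ∑_m (dV_m/dθ)† V_m(θ)`. -/
def H2 (V : Fin (M + 1) → Matrix (Fin n) (Fin n) ℂ) : Matrix (Fin n) (Fin n) ℂ :=
  (Complex.I / 2) •
    (((V 0)ᴴ - (V 0)⁻¹) * V 0 +
      ∑ m ∈ Finset.univ.erase (0 : Fin (M + 1)), (V m)ᴴ * V m)

/-- **The quantum Fisher information equals the survival activity.** -/
theorem QFI_eq_survival_activity
    (V : Fin (M + 1) → Matrix (Fin n) (Fin n) ℂ)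
    (hKraus : ∑ m, (V m)ᴴ * V m = 1)
    (hV0 : IsUnit (V 0))
    (ρ : Matrix (Fin n) (Fin n) ℂ) (hρ : ρ.PosSemidef) (hρ1 : ρ.trace = 1) :
    H2 V = 0 ∧
      4 * ((ρ * H1 V).trace - ((ρ * H2 V).trace) ^ 2)
        = (ρ * ((V 0)ᴴ * V 0)⁻¹).trace - 1 := by

  have hdet : IsUnit (V 0).det := (Matrix.isUnit_iff_isUnit_det _).mp hV0
  have hdetH : IsUnit ((V 0)ᴴ).det := by
    rw [Matrix.det_conjTranspose]; exact hdet.star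
  have hsum : ∑ m ∈ Finset.univ.erase (0 : Fin (M + 1)), (V m)ᴴ * V m
      = 1 - (V 0)ᴴ * V 0 := by
    have := Finset.add_sum_erase Finset.univ (fun m => (V m)ᴴ * V m)
      (Finset.mem_univ (0 : Fin (M + 1)))
    rw [hKraus] at this
    exact eq_sub_of_add_eq' this
  have hinv : (V 0)⁻¹ * V 0 = 1 := Matrix.nonsing_inv_mul _ hdet
  have hinvH : (V 0)ᴴ * ((V 0)ᴴ)⁻¹ = 1 := Matrix.mul_nonsing_inv _ hdetH
  have hmulinv : ((V 0)ᴴ * V 0)⁻¹ = (V 0)⁻¹ * ((V 0)ᴴ)⁻¹ := Matrix.mul_inv_rev _ _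
  have hH2 : H2 V = 0 := by
    rw [H2, hsum]
    have : ((V 0)ᴴ - (V 0)⁻¹) * V 0 + (1 - (V 0)ᴴ * V 0) = 0 := by
      rw [Matrix.sub_mul, hinv]; abel
    rw [this, smul_zero]
  refine ⟨hH2, ?_⟩
  have hH1 : H1 V = (1 / 4 : ℂ) • (((V 0)ᴴ * V 0)⁻¹ - 1) := by
    rw [H1, hsum, hmulinv]
    congr 1
    rw [Matrix.sub_mul, Matrix.mul_sub, Matrix.mul_sub, hinv, hinvH]
    abel
  rw [hH2, hH1, Matrix.mul_zero, Matrix.trace_zero, Matrix.mul_smul,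
    Matrix.trace_smul, Matrix.mul_sub, Matrix.mul_one, Matrix.trace_sub, hρ1]
  simp [smul_eq_mul]
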